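/- arXiv:2004.11004 — 2 statements merged into one kernel-verified Lean document; each statement's English description precedes it below -/
import Mathlib

section
/- Let V ⊆ V' be an extension of valuation rings and let (v_i)_{i<λ} be a fundamental pseudo convergent sequence in V (i.e., for every γ in the value group Γ of V, val(v_i − v_{i'}) > γ for all sufficiently large i < i' < λ). If x ∈ V' is a pseudo limit of (v_i) which is transcendental over the fraction field K of V, and V ⊆ V' is an immediate extension, then (v_i) is a transcendental pseudo convergent sequence: for every nonzero polynomial f ∈ V[X], val(f(v_i)) = val(f(x)) for all sufficiently large i < λ, hence val(f(v_i)) is eventually constant. -/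
open Polynomial

theorem AddValuation.map_sub_le_map_eval_sub {R Γ₀ : Type*} [CommRing R]
    [LinearOrderedAddCommMonoidWithTop Γ₀] (v : AddValuation R Γ₀) {f : R[X]}
    (hf : ∀ n, 0 ≤ v (f.coeff n)) {a b : R} (ha : 0 ≤ v a) (hb : 0 ≤ v b) :
    v (a - b) ≤ v (f.eval a - f.eval b) := by
  have hgeom (n : ℕ) : 0 ≤ v (∑ i ∈ Finset.range n, a ^ i * b ^ (n - 1 - i)) :=
    v.map_le_sum fun i _ => by
      rw [v.map_mul, v.map_pow, v.map_pow]
      exact add_nonneg (nsmul_nonneg ha _) (nsmul_nonneg hb _)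
  rw [eval_eq_sum_range, eval_eq_sum_range, ← Finset.sum_sub_distrib]
  refine v.map_le_sum fun n _ => ?_
  rw [← mul_sub, ← geom_sum₂_mul, v.map_mul, v.map_mul]
  calc v (a - b) = 0 + (0 + v (a - b)) := by rw [zero_add, zero_add]
    _ ≤ _ := add_le_add (hf n) (add_le_add_left (hgeom n) _)

section ValuationDefs

variable {Γ : Type*} [AddCommGroup Γ] [LinearOrder Γ] [IsOrderedAddMonoid Γ] {K : Type*} [Field K]

/-- `val` is an (additive, Krull) valuation on the field `K` with values in
`WithTop Γ`: `val 0 = ⊤`, nonzero elements have values in `Γ`, `val` is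
multiplicative-to-additive and satisfies the ultrametric inequality.
The valuation ring is `{x | 0 ≤ val x}`. -/
def IsAddValuation (val : K → WithTop Γ) : Prop :=
  val 0 = ⊤ ∧ (∀ x : K, x ≠ 0 → val x ≠ ⊤) ∧
    (∀ x y : K, val (x * y) = val x + val y) ∧
    ∀ x y : K, min (val x) (val y) ≤ val (x + y)

/-- The valuation ring of the subfield `K₀` gives an immediate extension inside
the valued field `K`: the inclusion induces isomorphisms on value groups and on
residue fields. -/
def IsImmediate (val : K → WithTop Γ) (K₀ : Subfield K) : Prop :=
  (∀ x : K, x ≠ 0 → ∃ y ∈ K₀, val y = val x) ∧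
    ∀ x : K, val x = 0 → ∃ y ∈ K₀, 0 < val (x - y)

/-- `(v i)_{i < lam}` is a pseudo convergent sequence:
`val (v i - v i'') < val (v i' - v i'')` for `i < i' < i'' < lam`. -/
def PseudoConvergent (val : K → WithTop Γ) (lam : Ordinal) (v : Ordinal → K) : Prop :=
  ∀ i i' i'' : Ordinal, i < i' → i' < i'' → i'' < lam →
    val (v i - v i'') < val (v i' - v i'')

/-- `x` is a pseudo limit of `(v i)_{i < lam}`: `val (x - v i)` is strictly
increasing in `i`. -/
def IsPseudoLimit (val : K → WithTop Γ) (lam : Ordinal) (v : Ordinal → K) (x : K) : Prop :=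
  ∀ i i' : Ordinal, i < i' → i' < lam → val (x - v i) < val (x - v i')

/-- the polynomial `f` has all its coefficients in the valuation ring of the
subfield `K₀`, i.e. `f ∈ V[X]` where `V = K₀ ∩ {0 ≤ val}`. -/
def CoeffsIn (val : K → WithTop Γ) (K₀ : Subfield K) (f : Polynomial K) : Prop :=
  ∀ n : ℕ, f.coeff n ∈ K₀ ∧ 0 ≤ val (f.coeff n)

/-- the values of `f` along the sequence `v` are eventually strictly
increasing (witnessing that `v` is algebraic via `f`). -/
def EvIncreasing (val : K → WithTop Γ) (lam : Ordinal) (v : Ordinal → K)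
    (f : Polynomial K) : Prop :=
  ∃ ν : Ordinal, ν < lam ∧ ∀ i i' : Ordinal, ν < i → i < i' → i' < lam →
    val (f.eval (v i)) < val (f.eval (v i'))

end ValuationDefs

/-!
Because the sequence is fundamental and `x` is a pseudo limit of it, `val (x - v i)` eventually
exceeds every element of `Γ`, in particular the finite value `val (f x)` (finite because `x` is
transcendental). Since `f` and `v i`, `x` are integral, `v i - x` divides `f (v i) - f x` in the
valuation ring, so `val (f (v i) - f x) > val (f x)` and the ultrametric inequality gives
`val (f (v i)) = val (f x)`.
-/

open Order

section Valuation

variable {Γ : Type*} [AddCommGroup Γ] [LinearOrder Γ] [IsOrderedAddMonoid Γ] {K : Type*} [Field K]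

theorem IsAddValuation.map_one {val : K → WithTop Γ} (h : IsAddValuation val) : val 1 = 0 := by
  have hsq : val 1 = val 1 + val 1 := by rw [← h.2.2.1, mul_one]
  lift val 1 to Γ using h.2.1 1 one_ne_zero with g
  norm_cast at hsq ⊢
  exact left_eq_add.mp hsq

def IsAddValuation.toAddValuation {val : K → WithTop Γ} (h : IsAddValuation val) :
    AddValuation K (WithTop Γ) :=
  AddValuation.of val h.1 h.map_one h.2.2.2 h.2.2.1

def IsFundamental (val : K → WithTop Γ) (lam : Ordinal) (s : Ordinal → K) : Prop :=
  ∀ g : Γ, ∃ ν < lam, ∀ i i' : Ordinal, ν < i → i < i' → i' < lam →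
    (g : WithTop Γ) < val (s i - s i')

theorem IsPseudoLimit.exists_lt_map_sub {v : AddValuation K (WithTop Γ)} {lam : Ordinal}
    {s : Ordinal → K} {x : K} (hlim : IsPseudoLimit v lam s x)
    (hlam : IsSuccLimit lam) (hfund : IsFundamental v lam s) (g : Γ) :
    ∃ ν < lam, ∀ i, ν < i → i < lam → (g : WithTop Γ) < v (s i - x) := by
  obtain ⟨ν, hν, hfund⟩ := hfund g
  refine ⟨ν, hν, fun i hi hil => ?_⟩
  have hsucc : succ i < lam := hlam.succ_lt hil
  have hcloser : v (s i - x) < v (x - s (succ i)) := by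
    rw [v.map_sub_swap]
    exact hlim i (succ i) (lt_succ i) hsucc
  calc (g : WithTop Γ) < v (s i - s (succ i)) := hfund i (succ i) hi (lt_succ i) hsucc
    _ = v (s i - x) := by
      rw [← v.map_add_eq_of_lt_left hcloser, sub_add_sub_cancel]

end Valuation

theorem fundamental_transcendental_general {Γ : Type*} [AddCommGroup Γ] [LinearOrder Γ] [IsOrderedAddMonoid Γ]
    {K' : Type*} [Field K'] (val : K' → WithTop Γ) (hval : IsAddValuation val)
    (Ksub : Subfield K')
    (lam : Ordinal) (hlam : Order.IsSuccLimit lam)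
    (v : Ordinal → K') (hv : ∀ i : Ordinal, i < lam → v i ∈ Ksub ∧ 0 ≤ val (v i))
    (hfund : ∀ g : Γ, ∃ ν : Ordinal, ν < lam ∧ ∀ i i' : Ordinal,
      ν < i → i < i' → i' < lam → (g : WithTop Γ) < val (v i - v i'))
    (x : K') (hx : 0 ≤ val x) (hlim : IsPseudoLimit val lam v x)
    (htrans : ∀ f : Polynomial K', f ≠ 0 → (∀ n : ℕ, f.coeff n ∈ Ksub) →
      f.eval x ≠ 0) :
    ∀ f : Polynomial K', f ≠ 0 → CoeffsIn val Ksub f →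
      ∃ ν : Ordinal, ν < lam ∧ ∀ i : Ordinal, ν < i → i < lam →
        val (f.eval (v i)) = val (f.eval x) := by
  intro f hf hcf
  let w := hval.toAddValuation
  obtain ⟨g, hg⟩ := WithTop.ne_top_iff_exists.mp (hval.2.1 _ (htrans f hf fun n => (hcf n).1))
  obtain ⟨ν, hν, hclose⟩ := IsPseudoLimit.exists_lt_map_sub (v := w) hlim hlam hfund g
  refine ⟨ν, hν, fun i hi hil => w.map_eq_of_lt_sub ?_⟩
  calc w (f.eval x) = g := hg.symm
    _ < w (v i - x) := hclose i hi hil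
    _ ≤ w (f.eval (v i) - f.eval x) :=
      w.map_sub_le_map_eval_sub (fun n => (hcf n).2) (hv i hil).2 hx

/-- **A fundamental pseudo convergent sequence with a transcendental pseudo
limit is transcendental.**  If `(v i)_{i<λ}` is fundamental (its differences are
eventually larger than any element of the value group `Γ`), `x ∈ V'` is a
pseudo limit transcendental over `K`, and `V ⊆ V'` is immediate, then for every
nonzero `f ∈ V[X]` one has `val (f (v i)) = val (f x)` for all large `i < λ`;
in particular `val (f (v i))` is eventually constant. -/
theorem fundamental_transcendental {Γ : Type*} [AddCommGroup Γ] [LinearOrder Γ] [IsOrderedAddMonoid Γ]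
    {K' : Type*} [Field K'] (val : K' → WithTop Γ) (hval : IsAddValuation val)
    (Ksub : Subfield K') (himm : IsImmediate val Ksub)
    (lam : Ordinal) (hlam : Order.IsSuccLimit lam)
    (v : Ordinal → K') (hv : ∀ i : Ordinal, i < lam → v i ∈ Ksub ∧ 0 ≤ val (v i))
    (hpc : PseudoConvergent val lam v)
    (hfund : ∀ g : Γ, ∃ ν : Ordinal, ν < lam ∧ ∀ i i' : Ordinal,
      ν < i → i < i' → i' < lam → (g : WithTop Γ) < val (v i - v i'))
    (x : K') (hx : 0 ≤ val x) (hlim : IsPseudoLimit val lam v x)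
    (htrans : ∀ f : Polynomial K', f ≠ 0 → (∀ n : ℕ, f.coeff n ∈ Ksub) →
      f.eval x ≠ 0) :
    ∀ f : Polynomial K', f ≠ 0 → CoeffsIn val Ksub f →
      ∃ ν : Ordinal, ν < lam ∧ ∀ i : Ordinal, ν < i → i < lam →
        val (f.eval (v i)) = val (f.eval x) :=
  fundamental_transcendental_general val hval Ksub lam hlam v hv hfund x hx hlim htrans
end

section
/- Let V ⊆ V' be an immediate extension of valuation rings with fraction fields K ⊆ K', and suppose x ∈ V' is a pseudo limit of a pseudo convergent sequence (v_j)_{j<λ} in V which has no pseudo limit in K. If (v_j) is transcendental (for every f ∈ V[X], val(f(v_j)) is eventually constant in j), then x is transcendental over K. -/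
/-!
Rescale `f` by a coefficient of minimal value so that it lies in `V[X]`; it still vanishes at `x`.
Expanding at `x`, `f (v i) = ∑ k ≥ 1, b k * (v i - x) ^ k` because `b 0 = f x = 0`. The values
`val (b k) + k • γ i` of the terms, with `γ i = val (v i - x)` strictly increasing, are affine in
`γ i` with distinct slopes, so eventually they are pairwise distinct and `val (f (v i))` is their
minimum. Every slope `k` is positive, so this minimum is strictly increasing, contradicting the
eventual constancy of `val (f (v i))` along a transcendental sequence.
-/

open Polynomial

open Filter

namespace IsAddValuation

variable {Γ : Type*} [AddCommGroup Γ] [LinearOrder Γ] [IsOrderedAddMonoid Γ] {K : Type*} [Field K]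
  {val : K → WithTop Γ}

theorem map_one_s19 (hval : IsAddValuation val) : val 1 = 0 := by
  obtain ⟨g, hg⟩ := WithTop.ne_top_iff_exists.mp (hval.2.1 1 one_ne_zero)
  have h := hval.2.2.1 1 1
  rw [mul_one, ← hg, ← WithTop.coe_add, WithTop.coe_inj, left_eq_add] at h
  rw [← hg, h, WithTop.coe_zero]

def toAddValuation_s19 (hval : IsAddValuation val) : AddValuation K (WithTop Γ) :=
  AddValuation.of val hval.1 hval.map_one_s19 hval.2.2.2 hval.2.2.1

theorem toAddValuation_apply (hval : IsAddValuation val) (x : K) : hval.toAddValuation_s19 x = val x :=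
  rfl

theorem exists_coeffsIn_C_mul (hval : IsAddValuation val) {K₀ : Subfield K} {f : K[X]}
    (hf : f ≠ 0) (hfK : ∀ n, f.coeff n ∈ K₀) : ∃ a ≠ 0, CoeffsIn val K₀ (C a * f) := by
  obtain ⟨m, hm, hmin⟩ := f.support.exists_min_image (fun n => val (f.coeff n))
    (support_nonempty.2 hf)
  have ha : f.coeff m ≠ 0 := mem_support_iff.1 hm
  refine ⟨(f.coeff m)⁻¹, inv_ne_zero ha, fun n => ⟨?_, ?_⟩⟩
  · rw [coeff_C_mul]
    exact K₀.mul_mem (K₀.inv_mem (hfK m)) (hfK n)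
  · have hle : val (f.coeff m) ≤ val (f.coeff n) := by
      by_cases hn : f.coeff n = 0
      · rw [hn, hval.1]
        exact le_top
      · exact hmin n (mem_support_iff.2 hn)
    set w := hval.toAddValuation_s19
    rw [coeff_C_mul, ← hval.toAddValuation_apply, w.map_mul, w.map_inv,
      ← LinearOrderedAddCommGroupWithTop.neg_add_cancel_of_ne_top (w.ne_top_iff.2 ha)]
    exact add_le_add_right hle _

end IsAddValuation

theorem StrictMono.eventually_ne {ι α : Type*} [Preorder ι] [NoMaxOrder ι] [LinearOrder α]
    {φ : ι → α} (hφ : StrictMono φ) (c : α) : ∀ᶠ i in atTop, φ i ≠ c := by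
  by_cases h : ∃ j, c ≤ φ j
  · obtain ⟨j, hj⟩ := h
    filter_upwards [eventually_gt_atTop j] with i hi using (hj.trans_lt (hφ hi)).ne'
  · push Not at h
    exact Eventually.of_forall fun i => (h i).ne

theorem Finset.strictMono_inf' {ι α β : Type*} [Preorder ι] [LinearOrder α] {s : Finset β}
    (hs : s.Nonempty) {f : β → ι → α} (hf : ∀ k ∈ s, StrictMono (f k)) :
    StrictMono fun i => s.inf' hs (f · i) := fun _ _ hij =>
  (Finset.lt_inf'_iff hs).2 fun k hk => (Finset.inf'_le _ hk).trans_lt (hf k hk hij)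

section OrderedMonoid

variable {ι Γ : Type*} [Preorder ι] [NoMaxOrder ι]
  [AddCancelCommMonoid Γ] [LinearOrder Γ] [IsOrderedCancelAddMonoid Γ] {γ : ι → Γ}

theorem StrictMono.eventually_add_nsmul_ne (hγ : StrictMono γ) (a b : Γ) {m n : ℕ} (hmn : m ≠ n) :
    ∀ᶠ i in atTop, a + m • γ i ≠ b + n • γ i := by
  wlog hlt : m < n generalizing a b m n
  · simpa only [ne_comm] using this b a hmn.symm (hmn.lt_or_gt.resolve_left hlt)
  obtain ⟨d, rfl⟩ := Nat.exists_eq_add_of_lt hlt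
  have hd : StrictMono fun i => b + (d + 1) • γ i := (hγ.const_nsmul d.succ_ne_zero).const_add b
  filter_upwards [hd.eventually_ne a] with i hi heq
  refine hi (add_right_cancel (b := m • γ i) ?_).symm
  rw [heq, show m + d + 1 = d + 1 + m by omega, add_nsmul, add_assoc]

theorem StrictMono.eventually_injOn_add_nsmul (hγ : StrictMono γ) (c : ℕ → Γ) (s : Finset ℕ) :
    ∀ᶠ i in atTop, Set.InjOn (fun k => c k + k • γ i) s := by
  have hpair : ∀ m ∈ s, ∀ n ∈ s, ∀ᶠ i in atTop, c m + m • γ i = c n + n • γ i → m = n := by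
    intro m _ n _
    rcases eq_or_ne m n with rfl | hmn
    · exact Eventually.of_forall fun _ _ => rfl
    · exact (hγ.eventually_add_nsmul_ne _ _ hmn).mono fun i hi heq => absurd heq hi
  filter_upwards [(eventually_all_finset s).2 fun m hm => (eventually_all_finset s).2 (hpair m hm)]
    with i hi m hm n hn using hi m hm n hn

end OrderedMonoid

namespace AddValuation

section Sum

variable {Γ : Type*} [AddCancelCommMonoid Γ] [LinearOrder Γ] [IsOrderedAddMonoid Γ]

theorem map_sum_eq_inf' {R ι : Type*} [Ring R] (v : AddValuation R (WithTop Γ)) {s : Finset ι}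
    (hs : s.Nonempty) {f : ι → R} {g : ι → Γ} (hfg : ∀ k ∈ s, v (f k) = g k)
    (hg : Set.InjOn g s) : v (∑ k ∈ s, f k) = s.inf' hs g := by
  classical
  obtain ⟨j, hj, hjg⟩ := s.exists_mem_eq_inf' hs g
  rw [hjg, ← hfg j hj, ← Finset.add_sum_erase s f hj]
  refine v.map_add_eq_of_lt_left (v.map_lt_sum (by simp [hfg j hj]) fun k hk => ?_)
  obtain ⟨hkj, hks⟩ := Finset.mem_erase.1 hk
  rw [hfg j hj, hfg k hks, WithTop.coe_lt_coe, ← hjg]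
  exact (Finset.inf'_le g hks).lt_of_ne fun h => hkj (hg hks hj (h.symm.trans hjg))

end Sum

section Eval

variable {Γ : Type*} [AddCancelCommMonoid Γ] [LinearOrder Γ] [IsOrderedCancelAddMonoid Γ]
  {K : Type*} [Field K]

theorem exists_strictMonoOn_eval_of_coeff_zero {ι : Type*} [LinearOrder ι] [NoMaxOrder ι]
    [Nonempty ι] (v : AddValuation K (WithTop Γ)) {y : ι → K} (hy : StrictMono (v ∘ y))
    {p : K[X]} (hp : p ≠ 0) (hp0 : p.coeff 0 = 0) :
    ∃ ν, StrictMonoOn (fun i => v (p.eval (y i))) (Set.Ici ν) := by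
  set γ : ι → Γ := fun i => (v (y i)).untop₀
  set c : ℕ → Γ := fun k => (v (p.coeff k)).untop₀
  have hγ : ∀ i, v (y i) = γ i := fun i =>
    (WithTop.coe_untop₀_of_ne_top (hy (exists_gt i).choose_spec).ne_top).symm
  have hc : ∀ k ∈ p.support, v (p.coeff k) = c k := fun k hk =>
    (WithTop.coe_untop₀_of_ne_top ((v.ne_top_iff).2 (mem_support_iff.1 hk))).symm
  have hγ_mono : StrictMono γ := fun i j hij => by
    simpa only [Function.comp, hγ, WithTop.coe_lt_coe] using hy hij
  have hterm : ∀ i, ∀ k ∈ p.support, v (p.coeff k * y i ^ k) = ↑(c k + k • γ i) := fun i k hk => by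
    rw [v.map_mul, v.map_pow, hc k hk, hγ, WithTop.coe_add, WithTop.coe_nsmul]
  have hsupp : p.support.Nonempty := support_nonempty.2 hp
  obtain ⟨ν, hν⟩ := eventually_atTop.1 (hγ_mono.eventually_injOn_add_nsmul c p.support)
  have heval : ∀ i, ν ≤ i →
      v (p.eval (y i)) = ↑(p.support.inf' hsupp fun k => c k + k • γ i) := fun i hi => by
    rw [eval_eq_sum, sum_def]
    exact v.map_sum_eq_inf' hsupp (hterm i) (hν i hi)
  refine ⟨ν, fun i hi j hj hij => ?_⟩
  simp only [heval i hi, heval j hj, WithTop.coe_lt_coe]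
  refine Finset.strictMono_inf' hsupp (f := fun k i => c k + k • γ i) (fun k hk => ?_) hij
  have hk0 : k ≠ 0 := fun h => mem_support_iff.1 hk (h ▸ hp0)
  exact (hγ_mono.const_nsmul hk0).const_add (c k)

end Eval

end AddValuation

theorem transcendental_pseudoLimit_general {Γ : Type*} [AddCommGroup Γ] [LinearOrder Γ] [IsOrderedAddMonoid Γ]
    {K' : Type*} [Field K'] (val : K' → WithTop Γ) (hval : IsAddValuation val)
    (Ksub : Subfield K')
    (lam : Ordinal) (hlam : Order.IsSuccLimit lam)
    (v : Ordinal → K')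
    (x : K') (hlim : IsPseudoLimit val lam v x)
    (htrans : ∀ f : Polynomial K', CoeffsIn val Ksub f →
      ∃ ν : Ordinal, ν < lam ∧ ∀ i i' : Ordinal, ν < i → i < i' → i' < lam →
        val (f.eval (v i)) = val (f.eval (v i'))) :
    ∀ f : Polynomial K', f ≠ 0 → (∀ n : ℕ, f.coeff n ∈ Ksub) → f.eval x ≠ 0 := by
  intro f hf hfK hfx
  obtain ⟨a, ha, hfa⟩ := hval.exists_coeffsIn_C_mul hf hfK
  have : NoMaxOrder (Set.Iio lam) := hlam.isSuccPrelimit.noMaxOrder_Iio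
  have : Nonempty (Set.Iio lam) := ⟨⟨0, hlam.bot_lt⟩⟩
  set p := taylor x (C a * f)
  have hp : p ≠ 0 := (taylor_injective x).ne_iff' (map_zero _) |>.2 (mul_ne_zero (C_ne_zero.2 ha) hf)
  have hp0 : p.coeff 0 = 0 := by simp [p, taylor_coeff_zero, hfx]
  have hy : StrictMono (hval.toAddValuation_s19 ∘ fun i : Set.Iio lam => v i - x) := fun i j hij => by
    simp only [Function.comp_apply, AddValuation.map_sub_swap _ (v _)]
    exact hlim i j hij j.2
  obtain ⟨ν, hν⟩ := hval.toAddValuation_s19.exists_strictMonoOn_eval_of_coeff_zero hy hp hp0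
  obtain ⟨μ, hμ, hconst⟩ := htrans _ hfa
  set i : Set.Iio lam := max ν ⟨Order.succ μ, hlam.succ_lt hμ⟩
  obtain ⟨j, hij⟩ := exists_gt i
  have hνi : ν ≤ i := le_max_left _ _
  have hμi : μ < i := (Order.lt_succ μ).trans_le (le_max_right ν ⟨_, hlam.succ_lt hμ⟩)
  have hlt := hν hνi (hνi.trans hij.le) hij
  simp only [p, taylor_eval, sub_add_cancel, hval.toAddValuation_apply] at hlt
  exact hlt.ne (hconst i j hμi hij j.2)

/-- **A transcendental pseudo convergent sequence has a transcendental pseudo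
limit.**  Let `V ⊆ V'` be an immediate extension of valuation rings and let
`x ∈ V'` be a pseudo limit of a pseudo convergent sequence `(v j)_{j<λ}` in `V`
with no pseudo limit in `K`.  If the sequence is transcendental (values of every
`f ∈ V[X]` along it are eventually constant), then `x` is transcendental over
`K`. -/
theorem transcendental_pseudoLimit {Γ : Type*} [AddCommGroup Γ] [LinearOrder Γ] [IsOrderedAddMonoid Γ]
    {K' : Type*} [Field K'] (val : K' → WithTop Γ) (hval : IsAddValuation val)
    (Ksub : Subfield K') (himm : IsImmediate val Ksub)
    (lam : Ordinal) (hlam : Order.IsSuccLimit lam)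
    (v : Ordinal → K') (hv : ∀ i : Ordinal, i < lam → v i ∈ Ksub ∧ 0 ≤ val (v i))
    (hpc : PseudoConvergent val lam v)
    (x : K') (hx : 0 ≤ val x) (hlim : IsPseudoLimit val lam v x)
    (hnolim : ¬ ∃ y : K', y ∈ Ksub ∧ IsPseudoLimit val lam v y)
    (htrans : ∀ f : Polynomial K', CoeffsIn val Ksub f →
      ∃ ν : Ordinal, ν < lam ∧ ∀ i i' : Ordinal, ν < i → i < i' → i' < lam →
        val (f.eval (v i)) = val (f.eval (v i'))) :
    ∀ f : Polynomial K', f ≠ 0 → (∀ n : ℕ, f.coeff n ∈ Ksub) → f.eval x ≠ 0 :=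
  transcendental_pseudoLimit_general val hval Ksub lam hlam v x hlim htrans
end
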